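/- Let d ≥ 1, λ, δ, γ > 0, and define M(λ,δ,γ,d) = [γ/((2d-1)λ+2+δ+γ)]·[(4d-1)λ/(2dλ+1)] + [1/((2d-1)λ+2+δ+γ)]·[γ/(1+δ+γ)]·[2dλ/(2dλ+1)] + [(1+δ)/((2d-1)λ+2+δ+γ)]·[2dλ/(2dλ+1)] + [(2d-1)λ/((2d-1)λ+2+δ+γ)]·[(2dλ+2)/(2dλ+1)]. If 1 + (1 - (1/(2d))(1+1/γ))(1+δ+γ) > 0 and λ < ((1+δ+γ)/(2dγ))·(2+δ+γ)/(1 + (1 - (1/(2d))(1+1/γ))(1+δ+γ)), then M(λ,δ,γ,d) < 1. -/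

import Mathlib

theorem stmt_7 (lam del gam : ℝ) (d : ℕ)
    (hd : 1 ≤ d) (hlam : 0 < lam) (hdel : 0 < del) (hgam : 0 < gam)
    (hden : 0 < 1 + (1 - 1 / (2 * d) * (1 + 1 / gam)) * (1 + del + gam))
    (hsmall : lam < (1 + del + gam) / (2 * d * gam)
        * ((2 + del + gam) / (1 + (1 - 1 / (2 * d) * (1 + 1 / gam)) * (1 + del + gam)))) :
    gam / ((2 * d - 1) * lam + 2 + del + gam) * ((4 * d - 1) * lam / (2 * d * lam + 1))
      + 1 / ((2 * d - 1) * lam + 2 + del + gam) * (gam / (1 + del + gam))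
          * (2 * d * lam / (2 * d * lam + 1))
      + (1 + del) / ((2 * d - 1) * lam + 2 + del + gam) * (2 * d * lam / (2 * d * lam + 1))
      + (2 * d - 1) * lam / ((2 * d - 1) * lam + 2 + del + gam)
          * ((2 * d * lam + 2) / (2 * d * lam + 1)) < 1 := by
  have hd1 : (1:ℝ) ≤ (d:ℝ) := by exact_mod_cast hd
  have hu : (0:ℝ) < 1 + del + gam := by linarith
  have hD : (0:ℝ) < (2 * d - 1) * lam + 2 + del + gam := by nlinarith
  have hN : (0:ℝ) < 2 * d * lam + 1 := by nlinarith
  have hdg : (0:ℝ) < 2 * (d:ℝ) * gam := by nlinarith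
  rw [div_mul_div_comm, lt_div_iff₀ (by positivity)] at hsmall
  have heq : 2 * (d:ℝ) * gam * (1 + (1 - 1 / (2 * d) * (1 + 1 / gam)) * (1 + del + gam))
      = 2 * (d:ℝ) * gam - (1 + del + gam) * (1 + gam - 2 * d * gam) := by
    have h2d : (2 * (d:ℝ)) ≠ 0 := by positivity
    field_simp
    ring
  rw [heq] at hsmall
  have key : lam * (2 * (d:ℝ) * gam - (1 + del + gam) * (1 + gam - 2 * d * gam))
      < (1 + del + gam) * (2 + del + gam) := hsmall
  have h1 : gam / ((2 * ↑d - 1) * lam + 2 + del + gam) * ((4 * ↑d - 1) * lam / (2 * ↑d * lam + 1))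
      + 1 / ((2 * ↑d - 1) * lam + 2 + del + gam) * (gam / (1 + del + gam)) * (2 * ↑d * lam / (2 * ↑d * lam + 1))
      + (1 + del) / ((2 * ↑d - 1) * lam + 2 + del + gam) * (2 * ↑d * lam / (2 * ↑d * lam + 1))
      + (2 * ↑d - 1) * lam / ((2 * ↑d - 1) * lam + 2 + del + gam) * ((2 * ↑d * lam + 2) / (2 * ↑d * lam + 1))
      = (gam * ((4 * ↑d - 1) * lam) * (1 + del + gam) + gam * (2 * ↑d * lam)
          + (1 + del) * (2 * ↑d * lam) * (1 + del + gam)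
          + (2 * ↑d - 1) * lam * (2 * ↑d * lam + 2) * (1 + del + gam))
        / (((2 * ↑d - 1) * lam + 2 + del + gam) * (2 * ↑d * lam + 1) * (1 + del + gam)) := by
    field_simp
  rw [h1, div_lt_one (by positivity)]
  nlinarith [key, mul_pos hD hN]
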